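/- For any real θ̄ > 0 and t̄ > 0, the affine function A(θ, t) = [2/t̄ · ln(1 + 1/θ̄) + 1/((θ̄+1) t̄)] − θ/(θ̄(θ̄+1) t̄) − (1/t̄²) ln(1 + 1/θ̄) · t is a lower bound for g(θ, t) = (1/t) ln(1 + 1/θ) on the domain θ > 0, t > 0, with equality at (θ̄, t̄). -/

import Mathlib

/-!
Write `L θ = log (1 + 1/θ)`. The key fact is that `√L` is convex on `(0, ∞)`: its derivative is
`-1 / (2 θ (θ + 1) √(L θ))`, and `θ ↦ θ² (θ + 1)² L θ` is increasing because `L θ ≥ 1/(θ + 1)`.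
Let `a = √(L θ̄)`. The tangent line of `√L` at `θ̄` gives `2 a √(L θ) ≥ 2 L θ̄ - (θ - θ̄)/(θ̄ (θ̄ + 1))`,
and the tangent plane of `(s, t) ↦ s² / t` at `(a, t̄)`, namely `s² / t ≥ 2 (a/t̄) s - (a/t̄)² t`,
turns this into the claimed affine minorant of `L θ / t`.
-/

open Real Set

theorem ConvexOn.add_mul_sub_le_of_hasDerivAt {S : Set ℝ} {f : ℝ → ℝ} {x y f' : ℝ}
    (hfc : ConvexOn ℝ S f) (hx : x ∈ S) (hy : y ∈ S) (hf' : HasDerivAt f f' x) :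
    f x + f' * (y - x) ≤ f y := by
  rcases lt_trichotomy x y with hxy | rfl | hyx
  · have := hfc.le_slope_of_hasDerivAt hx hy hxy hf'
    rw [slope_def_field, le_div_iff₀ (sub_pos.2 hxy)] at this
    linarith
  · simp
  · have := hfc.slope_le_of_hasDerivAt hy hx hyx hf'
    rw [slope_def_field, div_le_iff₀ (sub_pos.2 hyx)] at this
    linarith

theorem two_mul_mul_sub_sq_mul_le_sq_div {t : ℝ} (ht : 0 < t) (c s : ℝ) :
    2 * c * s - c ^ 2 * t ≤ s ^ 2 / t := by
  rw [le_div_iff₀ ht]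
  nlinarith [sq_nonneg (s - c * t)]

theorem log_one_add_inv_pos {θ : ℝ} (hθ : 0 < θ) : 0 < log (1 + θ⁻¹) :=
  log_pos (by simpa using hθ)

theorem inv_add_one_le_log_one_add_inv {θ : ℝ} (hθ : 0 < θ) : (θ + 1)⁻¹ ≤ log (1 + θ⁻¹) := by
  convert one_sub_inv_le_log_of_pos (by positivity : 0 < 1 + θ⁻¹) using 1
  field_simp
  ring

theorem hasDerivAt_log_one_add_inv {θ : ℝ} (hθ : 0 < θ) :
    HasDerivAt (fun x ↦ log (1 + x⁻¹)) (-(θ * (θ + 1))⁻¹) θ := by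
  convert ((hasDerivAt_inv hθ.ne').const_add 1).log (by positivity) using 1
  field_simp

theorem monotoneOn_sq_mul_sq_mul_log_one_add_inv :
    MonotoneOn (fun θ : ℝ ↦ θ ^ 2 * (θ + 1) ^ 2 * log (1 + θ⁻¹)) (Ioi 0) := by
  have hderiv : ∀ θ ∈ Ioi (0 : ℝ), HasDerivAt (fun θ : ℝ ↦ θ ^ 2 * (θ + 1) ^ 2 * log (1 + θ⁻¹))
      (θ * (θ + 1) * (2 * (2 * θ + 1) * log (1 + θ⁻¹) - 1)) θ := fun θ hθ ↦ by
    refine ((((hasDerivAt_id' θ).pow 2).mul (((hasDerivAt_id' θ).add_const 1).pow 2)).mul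
      (hasDerivAt_log_one_add_inv hθ)).congr_deriv ?_
    simp only [Pi.pow_apply, Pi.mul_apply]
    field_simp
    ring
  refine monotoneOn_of_hasDerivWithinAt_nonneg (convex_Ioi 0)
    (fun θ hθ ↦ (hderiv θ hθ).continuousAt.continuousWithinAt)
    (fun θ hθ ↦ (hderiv θ (interior_subset hθ)).hasDerivWithinAt) fun θ hθ ↦ ?_
  rw [interior_Ioi] at hθ
  have hθ : 0 < θ := hθ
  have hlog : 1 ≤ 2 * (2 * θ + 1) * log (1 + θ⁻¹) := calc
    1 ≤ 2 * (2 * θ + 1) * (θ + 1)⁻¹ := by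
      rw [← div_eq_mul_inv, le_div_iff₀ (by positivity)]
      linarith
    _ ≤ _ := by gcongr; exact inv_add_one_le_log_one_add_inv hθ
  have : 0 ≤ 2 * (2 * θ + 1) * log (1 + θ⁻¹) - 1 := by linarith
  positivity

theorem monotoneOn_mul_mul_sqrt_log_one_add_inv :
    MonotoneOn (fun θ : ℝ ↦ θ * (θ + 1) * √(log (1 + θ⁻¹))) (Ioi 0) := by
  have hsqrt : EqOn (fun θ : ℝ ↦ θ * (θ + 1) * √(log (1 + θ⁻¹)))
      (fun θ ↦ √(θ ^ 2 * (θ + 1) ^ 2 * log (1 + θ⁻¹))) (Ioi 0) := fun θ (hθ : 0 < θ) ↦ by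
    dsimp only
    rw [← mul_pow, sqrt_mul (by positivity), sqrt_sq (by positivity)]
  exact (sqrt_monotone.comp_monotoneOn monotoneOn_sq_mul_sq_mul_log_one_add_inv).congr hsqrt.symm

theorem hasDerivAt_sqrt_log_one_add_inv {θ : ℝ} (hθ : 0 < θ) :
    HasDerivAt (fun x ↦ √(log (1 + x⁻¹))) (-(2 * (θ * (θ + 1) * √(log (1 + θ⁻¹))))⁻¹) θ := by
  convert (hasDerivAt_log_one_add_inv hθ).sqrt (log_one_add_inv_pos hθ).ne' using 1
  field_simp

theorem convexOn_sqrt_log_one_add_inv : ConvexOn ℝ (Ioi 0) fun θ : ℝ ↦ √(log (1 + θ⁻¹)) := by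
  have hderiv := fun θ (hθ : θ ∈ Ioi (0 : ℝ)) ↦ hasDerivAt_sqrt_log_one_add_inv hθ
  refine MonotoneOn.convexOn_of_deriv (convex_Ioi 0)
    (fun θ hθ ↦ (hderiv θ hθ).continuousAt.continuousWithinAt)
    (fun θ hθ ↦ (hderiv θ (interior_subset hθ)).differentiableAt.differentiableWithinAt) ?_
  rw [interior_Ioi]
  intro x (hx : 0 < x) y (hy : 0 < y) hxy
  rw [(hderiv x hx).deriv, (hderiv y hy).deriv, neg_le_neg_iff]
  have := log_one_add_inv_pos hx
  have hmono := monotoneOn_mul_mul_sqrt_log_one_add_inv hx hy hxy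
  exact inv_anti₀ (by positivity) (mul_le_mul_of_nonneg_left hmono zero_le_two)

/-- For `θ̄ > 0`, `t̄ > 0`, the affine function
`A(θ,t) = 2/t̄·ln(1+1/θ̄) + 1/((θ̄+1)t̄) − θ/(θ̄(θ̄+1)t̄) − (1/t̄²)·ln(1+1/θ̄)·t`
is a lower bound of `g(θ,t) = ln(1+1/θ)/t` on `θ > 0, t > 0`, with equality at `(θ̄,t̄)`. -/
theorem stmt_5 (θb tb : ℝ) (hθb : 0 < θb) (htb : 0 < tb) :
    (2 / tb * Real.log (1 + 1 / θb) + 1 / ((θb + 1) * tb)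
        - θb / (θb * (θb + 1) * tb) - (1 / tb ^ 2) * Real.log (1 + 1 / θb) * tb
      = Real.log (1 + 1 / θb) / tb) ∧
    ∀ θ t : ℝ, 0 < θ → 0 < t →
      2 / tb * Real.log (1 + 1 / θb) + 1 / ((θb + 1) * tb)
        - θ / (θb * (θb + 1) * tb) - (1 / tb ^ 2) * Real.log (1 + 1 / θb) * t
      ≤ Real.log (1 + 1 / θ) / t := by
  refine ⟨by field_simp; ring, fun θ t hθ ht ↦ ?_⟩
  simp only [one_div]
  have hpos := log_one_add_inv_pos hθb
  set a := √(log (1 + θb⁻¹))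
  have ha2 : a ^ 2 = log (1 + θb⁻¹) := sq_sqrt hpos.le
  have ha0 : 0 < a := sqrt_pos.2 hpos
  have htangent := convexOn_sqrt_log_one_add_inv.add_mul_sub_le_of_hasDerivAt
    (mem_Ioi.2 hθb) (mem_Ioi.2 hθ) (hasDerivAt_sqrt_log_one_add_inv hθb)
  rw [← sq_sqrt (log_one_add_inv_pos hθ).le]
  calc _ = 2 * (a / tb) * (a + -(2 * (θb * (θb + 1) * a))⁻¹ * (θ - θb)) - (a / tb) ^ 2 * t := by
        rw [← ha2]; field_simp; ring
    _ ≤ 2 * (a / tb) * √(log (1 + θ⁻¹)) - (a / tb) ^ 2 * t := by gcongr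
    _ ≤ _ := two_mul_mul_sub_sq_mul_le_sq_div ht _ _
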